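/- arXiv:2410.14069 — 3 statements merged into one kernel-verified Lean document; each statement's English description precedes it below -/
import Mathlib

section
/- Consider a finite Markov decision process: a nonempty finite state space S, a nonempty finite action space A, a transition kernel P assigning to each (s,a) a probability mass function P(·|s,a) on S, a reward function r : S × A → ℝ, and a discount factor γ ∈ [0,1). Let β assign to each state s a probability mass function β(·|s) on A, let V_β : S → ℝ satisfy V_β(s) = ∑_{a} β(a|s) · ( r(s,a) + γ · ∑_{s'} P(s'|s,a) · V_β(s') ) for all s, and define Q_β(s,a) = r(s,a) + γ · ∑_{s'} P(s'|s,a) · V_β(s'). Let π : S → A be a deterministic policy such that Q_β(s, π(s)) ≥ V_β(s) for all s ∈ S, and let V_π : S → ℝ satisfy V_π(s) = r(s, π(s)) + γ · ∑_{s'} P(s'|s, π(s)) · V_π(s') for all s. Then V_π(s) ≥ V_β(s) for all s ∈ S. -/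
/-
Write `D = Vβ - Vπ`. Since `Vβ s ≤ Qβ s (π s)` and both `Qβ s (π s)` and `Vπ s` are
`r s (π s)` plus `γ` times a `P(·|s,π s)`-average, the rewards cancel and
`D s ≤ γ · 𝔼_{P(·|s,π s)} D ≤ γ · max D`. Taking `s` where `D` is maximal gives
`max D ≤ γ · max D`, hence `max D ≤ 0` because `γ < 1`.
-/

theorem PMF.sum_toReal_eq_one {X : Type*} [Fintype X] (p : PMF X) :
    ∑ x, (p x).toReal = 1 := by
  rw [← ENNReal.toReal_sum fun x _ => p.apply_ne_top x, ← tsum_fintype (L := .unconditional _),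
    p.tsum_coe, ENNReal.toReal_one]

theorem PMF.sum_toReal_mul_le {X : Type*} [Fintype X] (p : PMF X) {f : X → ℝ} {c : ℝ}
    (hf : ∀ x, f x ≤ c) : ∑ x, (p x).toReal * f x ≤ c :=
  calc ∑ x, (p x).toReal * f x ≤ ∑ x, (p x).toReal * c :=
        Finset.sum_le_sum fun x _ => mul_le_mul_of_nonneg_left (hf x) ENNReal.toReal_nonneg
    _ = c := by rw [← Finset.sum_mul, p.sum_toReal_eq_one, one_mul]

theorem nonpos_of_le_discounted_average {S : Type*} [Fintype S] (p : S → PMF S)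
    {γ : ℝ} (hγ0 : 0 ≤ γ) (hγ1 : γ < 1) {D : S → ℝ}
    (hD : ∀ s, D s ≤ γ * ∑ s', (p s s').toReal * D s') (s : S) : D s ≤ 0 := by
  have : Nonempty S := ⟨s⟩
  obtain ⟨s₀, hs₀⟩ := Finite.exists_max D
  have hmax : D s₀ ≤ γ * D s₀ :=
    (hD s₀).trans (mul_le_mul_of_nonneg_left ((p s₀).sum_toReal_mul_le hs₀) hγ0)
  have hmax_nonpos : D s₀ ≤ 0 := by nlinarith
  exact (hs₀ s).trans hmax_nonpos

theorem policy_improvement_general {S A : Type*} [Fintype S]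
    [Fintype A] (P : S → A → PMF S) (r : S → A → ℝ)
    (γ : ℝ) (hγ0 : 0 ≤ γ) (hγ1 : γ < 1)
    (Vβ : S → ℝ)
    (Qβ : S → A → ℝ)
    (hQβ : ∀ s a, Qβ s a = r s a + γ * ∑ s' : S, (P s a s').toReal * Vβ s')
    (π : S → A) (hπ : ∀ s : S, Qβ s (π s) ≥ Vβ s)
    (Vπ : S → ℝ)
    (hVπ : ∀ s : S, Vπ s = r s (π s) + γ * ∑ s' : S, (P s (π s) s').toReal * Vπ s') :
    ∀ s : S, Vπ s ≥ Vβ s := by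
  have hgap : ∀ s, Vβ s - Vπ s ≤ γ * ∑ s', (P s (π s) s').toReal * (Vβ s' - Vπ s') := by
    intro s
    have hVβ_le := hπ s
    rw [hQβ] at hVβ_le
    simp only [mul_sub, Finset.sum_sub_distrib]
    linarith [hVπ s]
  intro s
  linarith [nonpos_of_le_discounted_average (fun s => P s (π s)) hγ0 hγ1 hgap s]

/-- Policy improvement: if a deterministic policy `π` satisfies
`Q_β(s, π(s)) ≥ V_β(s)` at every state, then its value function dominates the
value function of the stochastic policy `β` everywhere. -/
theorem policy_improvement {S A : Type*} [Fintype S] [Nonempty S]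
    [Fintype A] [Nonempty A] (P : S → A → PMF S) (r : S → A → ℝ)
    (γ : ℝ) (hγ0 : 0 ≤ γ) (hγ1 : γ < 1)
    (β : S → PMF A) (Vβ : S → ℝ)
    (hVβ : ∀ s : S, Vβ s = ∑ a : A, ((β s) a).toReal *
      (r s a + γ * ∑ s' : S, (P s a s').toReal * Vβ s'))
    (Qβ : S → A → ℝ)
    (hQβ : ∀ s a, Qβ s a = r s a + γ * ∑ s' : S, (P s a s').toReal * Vβ s')
    (π : S → A) (hπ : ∀ s : S, Qβ s (π s) ≥ Vβ s)
    (Vπ : S → ℝ)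
    (hVπ : ∀ s : S, Vπ s = r s (π s) + γ * ∑ s' : S, (P s (π s) s').toReal * Vπ s') :
    ∀ s : S, Vπ s ≥ Vβ s :=
  policy_improvement_general P r γ hγ0 hγ1 Vβ Qβ hQβ π hπ Vπ hVπ
end

section
/- (Proposition 1, Policy Improvement with Partial Policy Learning.) Consider a finite Markov decision process: a nonempty finite state space S, a nonempty finite action space A, a transition kernel P assigning to each (s,a) a probability mass function P(·|s,a) on S, a reward function r : S × A → ℝ, and a discount factor γ ∈ [0,1). Let β assign to each state s a probability mass function β(·|s) on A, let V_β : S → ℝ satisfy V_β(s) = ∑_{a} β(a|s) · ( r(s,a) + γ · ∑_{s'} P(s'|s,a) · V_β(s') ) for all s, and define Q_β(s,a) = r(s,a) + γ · ∑_{s'} P(s'|s,a) · V_β(s'). Let π : S → A be a deterministic policy such that for every s ∈ S, π(s) lies in the support of β(·|s) and Q_β(s, π(s)) = max over a in the support of β(·|s) of Q_β(s,a); and let V_π : S → ℝ satisfy V_π(s) = r(s, π(s)) + γ · ∑_{s'} P(s'|s, π(s)) · V_π(s') for all s. Then V_π(s) ≥ V_β(s) for all s ∈ S, and consequently for every initial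 probability mass function μ₀ on S the performance J(π) = ∑_{s} μ₀(s) · V_π(s) satisfies J(π) ≥ J(β) = ∑_{s} μ₀(s) · V_β(s). -/
open scoped Classical

/-!
Acting greedily once with respect to `Q_β` inside the support of `β` does at least as well as `β`:
`V_β(s) = 𝔼_{a ∼ β(·|s)} Q_β(s,a) ≤ Q_β(s, π s)`. Hence `g = V_π - V_β` satisfies
`γ · 𝔼_{s' ∼ P(·|s, π s)} g(s') ≤ g(s)`, and at a minimiser `s₀` of `g` this gives
`γ · g(s₀) ≤ g(s₀)`, so `g ≥ g(s₀) ≥ 0` because `γ < 1`.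
-/

namespace PMF

variable {α : Type*} [Fintype α] (p : PMF α)

lemma sum_toReal_eq_one_s7 : ∑ a, (p a).toReal = 1 := by
  rw [← ENNReal.toReal_sum fun a _ => p.apply_ne_top a, ← tsum_fintype (L := .unconditional _),
    p.tsum_coe, ENNReal.toReal_one]

lemma sum_toReal_mul_le_s7 {f : α → ℝ} {c : ℝ} (h : ∀ a ∈ p.support, f a ≤ c) :
    ∑ a, (p a).toReal * f a ≤ c :=
  calc ∑ a, (p a).toReal * f a ≤ ∑ a, (p a).toReal * c := by
        refine Finset.sum_le_sum fun a _ => ?_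
        by_cases ha : p a = 0
        · simp [ha]
        · exact mul_le_mul_of_nonneg_left (h a ((p.mem_support_iff a).2 ha)) ENNReal.toReal_nonneg
    _ = c := by rw [← Finset.sum_mul, p.sum_toReal_eq_one_s7, one_mul]

lemma le_sum_toReal_mul {f : α → ℝ} {c : ℝ} (h : ∀ a ∈ p.support, c ≤ f a) :
    c ≤ ∑ a, (p a).toReal * f a := by
  simpa [mul_neg, Finset.sum_neg_distrib] using
    p.sum_toReal_mul_le_s7 (f := -f) (c := -c) fun a ha => neg_le_neg (h a ha)

end PMF

theorem nonneg_of_discounted_mean_le {S : Type*} [Fintype S] (K : S → PMF S) {γ : ℝ}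
    (hγ0 : 0 ≤ γ) (hγ1 : γ < 1) {g : S → ℝ}
    (hg : ∀ s, γ * ∑ s', (K s s').toReal * g s' ≤ g s) (s : S) : 0 ≤ g s := by
  have : Nonempty S := ⟨s⟩
  obtain ⟨s₀, hs₀⟩ := Finite.exists_min g
  have : γ * g s₀ ≤ g s₀ :=
    (mul_le_mul_of_nonneg_left ((K s₀).le_sum_toReal_mul fun s' _ => hs₀ s') hγ0).trans (hg s₀)
  nlinarith [hs₀ s]

/-- Proposition 1 (Policy Improvement with Partial Policy Learning).
If at every state `s` the deterministic policy `π` picks an action in the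
support of `β(·|s)` that maximizes `Q_β(s,·)` over this support, then
`V_π ≥ V_β` pointwise, and consequently `J(π) ≥ J(β)` for every initial
distribution `μ₀`. -/
theorem partial_policy_learning_improvement {S A : Type*} [Fintype S]
    [Fintype A] (P : S → A → PMF S) (r : S → A → ℝ)
    (γ : ℝ) (hγ0 : 0 ≤ γ) (hγ1 : γ < 1)
    (β : S → PMF A) (Vβ : S → ℝ)
    (hVβ : ∀ s : S, Vβ s = ∑ a : A, ((β s) a).toReal *
      (r s a + γ * ∑ s' : S, (P s a s').toReal * Vβ s'))
    (Qβ : S → A → ℝ)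
    (hQβ : ∀ s a, Qβ s a = r s a + γ * ∑ s' : S, (P s a s').toReal * Vβ s')
    (π : S → A)
    (hπ_max : ∀ s : S, Qβ s (π s) =
      (Finset.univ.filter fun a : A => (β s) a ≠ 0).sup'
        (by
          obtain ⟨a, ha⟩ := (β s).support_nonempty
          exact ⟨a, Finset.mem_filter.2 ⟨Finset.mem_univ a,
            ((β s).mem_support_iff a).mp ha⟩⟩) (Qβ s))
    (Vπ : S → ℝ)
    (hVπ : ∀ s : S, Vπ s = r s (π s) + γ * ∑ s' : S, (P s (π s) s').toReal * Vπ s') :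
    (∀ s : S, Vπ s ≥ Vβ s) ∧
    (∀ μ₀ : PMF S, ∑ s : S, (μ₀ s).toReal * Vπ s ≥ ∑ s : S, (μ₀ s).toReal * Vβ s) := by
  have hVβ_le_Qβ : ∀ s, Vβ s ≤ Qβ s (π s) := fun s => by
    rw [hVβ s, hπ_max s]
    simp only [← hQβ s]
    exact (β s).sum_toReal_mul_le_s7 fun a ha =>
      Finset.le_sup' _ (Finset.mem_filter.2 ⟨Finset.mem_univ a, ((β s).mem_support_iff a).1 ha⟩)
  have hmean : ∀ s, γ * ∑ s', (P s (π s) s').toReal * (Vπ s' - Vβ s') ≤ Vπ s - Vβ s := fun s => by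
    simp only [mul_sub, Finset.sum_sub_distrib]
    linarith [hVπ s, hQβ s (π s), hVβ_le_Qβ s]
  have hVβ_le_Vπ : ∀ s, Vβ s ≤ Vπ s := fun s =>
    sub_nonneg.1 (nonneg_of_discounted_mean_le (fun s => P s (π s)) hγ0 hγ1 hmean s)
  exact ⟨hVβ_le_Vπ, fun μ₀ => Finset.sum_le_sum fun s _ =>
    mul_le_mul_of_nonneg_left (hVβ_le_Vπ s) ENNReal.toReal_nonneg⟩
end

section
/- (Performance difference lemma, finite form.) Consider a finite Markov decision process: a nonempty finite state space S, a nonempty finite action space A, a transition kernel P assigning to each (s,a) a probability mass function P(·|s,a) on S, a reward function r : S × A → ℝ, and a discount factor γ ∈ [0,1). Let μ₀ be a probability mass function on S. Let β assign to each state s a probability mass function β(·|s) on A, with V_β : S → ℝ satisfying V_β(s) = ∑_{a} β(a|s) · ( r(s,a) + γ · ∑_{s'} P(s'|s,a) · V_β(s') ) for all s, and Q_β(s,a) = r(s,a) + γ · ∑_{s'} P(s'|s,a) · V_β(s'). Let π : S → A be a deterministic policy with V_π : S → ℝ satisfying V_π(s) = r(s, π(s)) + γ · ∑_{s'} P(s'|s,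 π(s)) · V_π(s') for all s, and let d_π : S → ℝ be any function satisfying the occupancy equation d_π(s) = (1−γ) · μ₀(s) + γ · ∑_{s'} d_π(s') · P(s|s', π(s')) for all s. Then ∑_{s} μ₀(s) · ( V_π(s) − V_β(s) ) = (1/(1−γ)) · ∑_{s} d_π(s) · ( Q_β(s, π(s)) − V_β(s) ). -/
/-- Performance difference lemma (finite form):
`∑ s, μ₀(s) (V_π(s) − V_β(s)) = (1/(1−γ)) ∑ s, d_π(s) (Q_β(s, π(s)) − V_β(s))`,
where `d_π` satisfies the discounted occupancy stationarity equation. -/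
theorem performance_difference_lemma {S A : Type*} [Fintype S] [Nonempty S]
    [Fintype A] [Nonempty A] (P : S → A → PMF S) (r : S → A → ℝ)
    (γ : ℝ) (hγ0 : 0 ≤ γ) (hγ1 : γ < 1) (μ₀ : PMF S)
    (β : S → PMF A) (Vβ : S → ℝ)
    (hVβ : ∀ s : S, Vβ s = ∑ a : A, ((β s) a).toReal *
      (r s a + γ * ∑ s' : S, (P s a s').toReal * Vβ s'))
    (Qβ : S → A → ℝ)
    (hQβ : ∀ s a, Qβ s a = r s a + γ * ∑ s' : S, (P s a s').toReal * Vβ s')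
    (π : S → A) (Vπ : S → ℝ)
    (hVπ : ∀ s : S, Vπ s = r s (π s) + γ * ∑ s' : S, (P s (π s) s').toReal * Vπ s')
    (dπ : S → ℝ)
    (hdπ : ∀ s : S, dπ s = (1 - γ) * (μ₀ s).toReal +
      γ * ∑ s' : S, dπ s' * (P s' (π s') s).toReal) :
    ∑ s : S, (μ₀ s).toReal * (Vπ s - Vβ s) =
      (1 / (1 - γ)) * ∑ s : S, dπ s * (Qβ s (π s) - Vβ s) := by
  set Δ : S → ℝ := fun s => Vπ s - Vβ s with hΔ
  set T : S → ℝ := fun s => ∑ s' : S, (P s (π s) s').toReal * Δ s' with hT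
  have hne : (1 : ℝ) - γ ≠ 0 := by linarith
  -- Bellman: Δ s = (Qβ s (π s) - Vβ s) + γ * T s
  have key : ∀ s : S, Δ s = (Qβ s (π s) - Vβ s) + γ * T s := by
    intro s
    have := hVπ s
    have := hQβ s (π s)
    simp only [hΔ, hT]
    rw [hVπ s, hQβ s (π s)]
    rw [show (∑ s' : S, (P s (π s) s').toReal * (Vπ s' - Vβ s'))
        = (∑ s' : S, (P s (π s) s').toReal * Vπ s')
          - ∑ s' : S, (P s (π s) s').toReal * Vβ s' by
      rw [← Finset.sum_sub_distrib]; ring_nf]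
    ring
  -- sum dπ Δ via occupancy equation
  have h1 : ∑ s : S, dπ s * Δ s
      = (1 - γ) * (∑ s : S, (μ₀ s).toReal * Δ s) + γ * ∑ s' : S, dπ s' * T s' := by
    calc ∑ s : S, dπ s * Δ s
        = ∑ s : S, ((1 - γ) * (μ₀ s).toReal +
            γ * ∑ s' : S, dπ s' * (P s' (π s') s).toReal) * Δ s := by
          refine Finset.sum_congr rfl fun s _ => ?_; rw [← hdπ s]
      _ = (1 - γ) * (∑ s : S, (μ₀ s).toReal * Δ s)
          + γ * ∑ s : S, ∑ s' : S, dπ s' * (P s' (π s') s).toReal * Δ s := by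
          rw [Finset.mul_sum, Finset.mul_sum, ← Finset.sum_add_distrib]
          refine Finset.sum_congr rfl fun s _ => ?_
          rw [add_mul, mul_assoc γ, Finset.sum_mul]; ring
      _ = (1 - γ) * (∑ s : S, (μ₀ s).toReal * Δ s) + γ * ∑ s' : S, dπ s' * T s' := by
          have hswap : (∑ s : S, ∑ s' : S, dπ s' * (P s' (π s') s).toReal * Δ s)
              = ∑ s' : S, dπ s' * T s' := by
            rw [Finset.sum_comm]
            refine Finset.sum_congr rfl fun s' _ => ?_
            simp only [hT, Finset.mul_sum]
            refine Finset.sum_congr rfl fun s _ => ?_; ring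
          rw [hswap]
  -- sum dπ Δ via Bellman
  have h2 : ∑ s : S, dπ s * Δ s
      = (∑ s : S, dπ s * (Qβ s (π s) - Vβ s)) + γ * ∑ s : S, dπ s * T s := by
    rw [Finset.mul_sum, ← Finset.sum_add_distrib]
    refine Finset.sum_congr rfl fun s _ => ?_
    rw [key s]; ring
  have h3 : (1 - γ) * (∑ s : S, (μ₀ s).toReal * Δ s)
      = ∑ s : S, dπ s * (Qβ s (π s) - Vβ s) := by linarith [h1, h2]
  field_simp [hΔ]
  linarith [h3]
end
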